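/- Let A and B be n×n complex matrices with positive definite real parts, and let X be an n×n complex matrix. If the block matrix M = [[A, X],[X*, B]] is accretive (i.e., its real part (M+M*)/2 is positive semidefinite), then A − X B⁻¹ X* is accretive. -/

import Mathlib

open MeasureTheory Matrix
open scoped ComplexOrder

/-- The "real part" (Hermitian part) of a complex matrix: `(A + Aᴴ)/2`. -/
noncomputable def mre {m : Type*} (A : Matrix m m ℂ) : Matrix m m ℂ :=
  (1/2 : ℂ) • (A + Aᴴ)

/-- A matrix is accretive if its Hermitian part is positive semidefinite. -/
def Accretive {m : Type*} [Fintype m] (A : Matrix m m ℂ) : Prop :=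
  (mre A).PosSemidef

/-- Principal fractional power `A ^ t` of a matrix whose spectrum avoids `(-∞, 0]`,
given (for `0 < t < 1`) by the standard integral formula
`A^t = (sin (tπ)/π) ∫₀^∞ s^(t-1) A (A + s I)⁻¹ ds`. -/
noncomputable def apow {m : Type*} [Fintype m] [DecidableEq m]
    (A : Matrix m m ℂ) (t : ℝ) : Matrix m m ℂ :=
  if t = 0 then 1 else if t = 1 then A else
    Matrix.of fun i j => ∫ s in Set.Ioi (0 : ℝ),
      (((Real.sin (t * Real.pi) / Real.pi) * s ^ (t - 1)) •
        (A * (A + (s : ℂ) • (1 : Matrix m m ℂ))⁻¹)) i j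

/-- The weighted geometric mean `A ♯ₜ B = A^(1/2) (A^(-1/2) B A^(-1/2))^t A^(1/2)`
of (strictly accretive) matrices. -/
noncomputable def gmean {m : Type*} [Fintype m] [DecidableEq m]
    (A : Matrix m m ℂ) (t : ℝ) (B : Matrix m m ℂ) : Matrix m m ℂ :=
  apow A (1/2) * apow ((apow A (1/2))⁻¹ * B * (apow A (1/2))⁻¹) t * apow A (1/2)

/-- The absolute value `|X| = (Xᴴ X)^(1/2)` of a matrix. -/
noncomputable def absM {m : Type*} [Fintype m] [DecidableEq m]
    (X : Matrix m m ℂ) : Matrix m m ℂ :=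
  (Matrix.posSemidef_conjTranspose_mul_self X).1.eigenvectorUnitary.1 *
    Matrix.diagonal ((↑) ∘ Real.sqrt ∘ (Matrix.posSemidef_conjTranspose_mul_self X).1.eigenvalues) *
    (star (Matrix.posSemidef_conjTranspose_mul_self X).1.eigenvectorUnitary : Matrix m m ℂ)

/-- The `j`-th largest singular value of a complex matrix. -/
noncomputable def singVals {k : ℕ} (T : Matrix (Fin k) (Fin k) ℂ) (j : Fin k) : ℝ :=
  Real.sqrt (((Matrix.posSemidef_conjTranspose_mul_self T).1.eigenvalues ∘
    Tuple.sort (Matrix.posSemidef_conjTranspose_mul_self T).1.eigenvalues) j.rev)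

/-- The `j`-th largest eigenvalue of a Hermitian matrix (junk value `0` otherwise). -/
noncomputable def eigDesc {k : ℕ} (T : Matrix (Fin k) (Fin k) ℂ) (j : Fin k) : ℝ :=
  if h : T.IsHermitian then (h.eigenvalues ∘ Tuple.sort h.eigenvalues) j.rev else 0

/-- The numerical range of `A` lies in the sector
`S_α = {z : Re z ≥ 0, |Im z| ≤ tan α · Re z}`. -/
def InSector {k : ℕ} (α : ℝ) (A : Matrix (Fin k) (Fin k) ℂ) : Prop :=
  ∀ x : EuclideanSpace ℂ (Fin k), ‖x‖ = 1 →
    0 ≤ (star (x : Fin k → ℂ) ⬝ᵥ A.mulVec (x : Fin k → ℂ)).re ∧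
      |(star (x : Fin k → ℂ) ⬝ᵥ A.mulVec (x : Fin k → ℂ)).im| ≤
        Real.tan α * (star (x : Fin k → ℂ) ⬝ᵥ A.mulVec (x : Fin k → ℂ)).re

/-!
The real part of `T` represents the real part of its quadratic form,
`⟪x, Re(T) x⟫ = Re ⟪x, T x⟫`, so accretivity is nonnegativity of `Re ⟪x, T x⟫`.
For the block matrix `M`, the test vector `(x, -B⁻¹ Xᴴ x)` annihilates the second block row of
`M`, and the quadratic form of `M` at it equals that of `A - X B⁻¹ Xᴴ` at `x`.
-/

lemma mre_isHermitian {m : Type*} (T : Matrix m m ℂ) : (mre T).IsHermitian := by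
  simp only [mre, IsHermitian, conjTranspose_smul, conjTranspose_add, conjTranspose_conjTranspose,
    add_comm Tᴴ]
  norm_num

variable {m k : Type*} [Fintype m] [Fintype k]

lemma dotProduct_mre_mulVec (T : Matrix m m ℂ) (x : m → ℂ) :
    star x ⬝ᵥ mre T *ᵥ x = ((star x ⬝ᵥ T *ᵥ x).re : ℂ) := by
  have hconj : star x ⬝ᵥ Tᴴ *ᵥ x = star (star x ⬝ᵥ T *ᵥ x) := by
    rw [dotProduct_mulVec, star_dotProduct, star_star, star_mulVec]
  rw [mre, smul_mulVec, add_mulVec, dotProduct_smul, dotProduct_add, hconj, Complex.star_def,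
    Complex.add_conj, smul_eq_mul]
  push_cast
  ring

lemma accretive_iff_forall_re_dotProduct_mulVec_nonneg {T : Matrix m m ℂ} :
    Accretive T ↔ ∀ x, 0 ≤ (star x ⬝ᵥ T *ᵥ x).re := by
  simp only [Accretive, posSemidef_iff_dotProduct_mulVec, mre_isHermitian, true_and,
    dotProduct_mre_mulVec, Complex.zero_le_real]

lemma isUnit_of_posDef_mre [DecidableEq m] {B : Matrix m m ℂ} (hB : (mre B).PosDef) :
    IsUnit B := by
  refine mulVec_injective_iff_isUnit.mp <|
    (injective_iff_map_eq_zero (mulVecLin B)).mpr fun x hx => ?_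
  by_contra hx0
  have hpos := (posDef_iff_dotProduct_mulVec.mp hB).2 hx0
  rw [dotProduct_mre_mulVec, ← mulVecLin_apply, hx, dotProduct_zero, Complex.zero_re,
    Complex.ofReal_zero] at hpos
  exact lt_irrefl 0 hpos

theorem Accretive.schur_complement [DecidableEq k] {A : Matrix m m ℂ} {B : Matrix k k ℂ}
    {X : Matrix m k ℂ} (hM : Accretive (fromBlocks A X Xᴴ B)) (hB : IsUnit B) :
    Accretive (A - X * B⁻¹ * Xᴴ) := by
  rw [accretive_iff_forall_re_dotProduct_mulVec_nonneg] at hM ⊢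
  intro x
  set y := -(B⁻¹ * Xᴴ) *ᵥ x with hy_def
  have hy : Xᴴ *ᵥ x + B *ᵥ y = 0 := by
    rw [hy_def, neg_mulVec, mulVec_neg, mulVec_mulVec,
      mul_nonsing_inv_cancel_left B _ ((isUnit_iff_isUnit_det B).mp hB), add_neg_cancel]
  have hform : star (Sum.elim x y) ⬝ᵥ fromBlocks A X Xᴴ B *ᵥ Sum.elim x y =
      star x ⬝ᵥ (A - X * B⁻¹ * Xᴴ) *ᵥ x := by
    rw [fromBlocks_mulVec, Sum.elim_comp_inl, Sum.elim_comp_inr, hy, Function.star_sumElim,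
      sumElim_dotProduct_sumElim, dotProduct_zero, add_zero, hy_def, sub_mulVec, neg_mulVec,
      mulVec_neg, mulVec_mulVec, Matrix.mul_assoc, sub_eq_add_neg]
  simpa only [hform] using hM (Sum.elim x y)

theorem stmt0_general {n : ℕ} (A B X : Matrix (Fin n) (Fin n) ℂ)
    (hB : (mre B).PosDef)
    (hM : Accretive (Matrix.fromBlocks A X Xᴴ B)) :
    Accretive (A - X * B⁻¹ * Xᴴ) :=
  hM.schur_complement (isUnit_of_posDef_mre hB)

/-- If `A, B` have positive definite real parts and the block matrix
`[[A, X], [Xᴴ, B]]` is accretive, then `A - X B⁻¹ Xᴴ` is accretive. -/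
theorem stmt0 {n : ℕ} (A B X : Matrix (Fin n) (Fin n) ℂ)
    (hA : (mre A).PosDef) (hB : (mre B).PosDef)
    (hM : Accretive (Matrix.fromBlocks A X Xᴴ B)) :
    Accretive (A - X * B⁻¹ * Xᴴ) :=
  stmt0_general A B X hB hM
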